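/- arXiv:1010.1834 — 2 statements merged into one kernel-verified Lean document; each statement's English description precedes it below -/
import Mathlib

section
/- The intersection of K spheres in R^K whose centers are K affinely independent points consists of at most two points. -/
/-!
If `z` and `w` are both at distance `dᵢ` from every centre `xᵢ`, then `w - z` is orthogonal to
every `xᵢ - xⱼ` (the diagonals of a kite are orthogonal), i.e. to the `(K - 1)`-dimensional
`vectorSpan` of the centres. So the solution set lies on a line, and a line meets the sphere
around `x₀` in at most two points.
-/

open Set Module EuclideanGeometry

section

variable {V P : Type*} [NormedAddCommGroup V] [InnerProductSpace ℝ V] [MetricSpace P]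
  [NormedAddTorsor V P]

theorem Collinear.encard_le_two_of_subset_sphere {t : Set P} (ht : Collinear ℝ t) {s : Sphere P}
    (hts : t ⊆ s) : t.encard ≤ 2 := by
  obtain rfl | ⟨p, hp⟩ := t.eq_empty_or_nonempty
  · simp
  obtain ⟨v, hv⟩ := (collinear_iff_of_mem hp).1 ht
  calc t.encard ≤ ({p, s.secondInter p v} : Set P).encard := by
        refine encard_mono fun q hq => ?_
        obtain ⟨r, rfl⟩ := hv q hq
        have hline : r • v +ᵥ p ∈ AffineSubspace.mk' p (ℝ ∙ v) :=
          AffineSubspace.vadd_mem_mk' p (Submodule.mem_span_singleton.2 ⟨r, rfl⟩)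
        exact (s.eq_or_eq_secondInter_of_mem_mk'_span_singleton_iff_mem (hts hp) hline).2 (hts hq)
    _ ≤ 2 := (encard_insert_le _ _).trans (by norm_num)

theorem vectorSpan_range_isOrtho_vectorSpan_setOf_forall_dist_eq {ι : Type*} (x : ι → P)
    (d : ι → ℝ) : vectorSpan ℝ (range x) ⟂ vectorSpan ℝ {z | ∀ i, dist z (x i) = d i} := by
  rw [vectorSpan_def, vectorSpan_def, Submodule.isOrtho_span]
  rintro _ ⟨_, ⟨i, rfl⟩, _, ⟨j, rfl⟩, rfl⟩ _ ⟨w, hw, z, hz, rfl⟩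
  exact inner_vsub_vsub_of_dist_eq_of_dist_eq ((hz j).trans (hw j).symm) ((hz i).trans (hw i).symm)

theorem collinear_setOf_forall_dist_eq [FiniteDimensional ℝ V] {ι : Type*} [Fintype ι]
    [Nonempty ι] {x : ι → P} (hx : AffineIndependent ℝ x) (hcard : finrank ℝ V ≤ Fintype.card ι)
    (d : ι → ℝ) : Collinear ℝ {z | ∀ i, dist z (x i) = d i} := by
  have hsplit := (vectorSpan ℝ (range x)).finrank_add_finrank_orthogonal
  have hspan := hx.finrank_vectorSpan_add_one
  rw [collinear_iff_finrank_le_one]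
  calc finrank ℝ (vectorSpan ℝ {z | ∀ i, dist z (x i) = d i})
      ≤ finrank ℝ (vectorSpan ℝ (range x))ᗮ :=
        Submodule.finrank_mono (vectorSpan_range_isOrtho_vectorSpan_setOf_forall_dist_eq x d).symm
    _ ≤ 1 := by omega

end

theorem sphere_intersection_at_most_two_general (K : ℕ) (hK : 1 ≤ K)
    (x : Fin K → EuclideanSpace ℝ (Fin K)) (hx : AffineIndependent ℝ x)
    (d : Fin K → ℝ) :
    {z : EuclideanSpace ℝ (Fin K) | ∀ i, dist z (x i) = d i}.encard ≤ 2 := by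
  let i₀ : Fin K := ⟨0, hK⟩
  have : Nonempty (Fin K) := ⟨i₀⟩
  have hcol := collinear_setOf_forall_dist_eq hx (by simp) d
  exact hcol.encard_le_two_of_subset_sphere (s := ⟨x i₀, d i₀⟩) fun z hz => hz i₀

theorem sphere_intersection_at_most_two (K : ℕ) (hK : 1 ≤ K)
    (x : Fin K → EuclideanSpace ℝ (Fin K)) (hx : AffineIndependent ℝ x)
    (d : Fin K → ℝ) (hd : ∀ i, 0 < d i) :
    {z : EuclideanSpace ℝ (Fin K) | ∀ i, dist z (x i) = d i}.encard ≤ 2 :=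
  sphere_intersection_at_most_two_general K hK x hx d
end

section
/- For the graph on vertices {1,...,K+3} with edges {i,j} for 0 < i−j ≤ K together with edge {1, K+3}, all edge weights equal to 1, in the case K = 2 (so n = 5): the number of embeddings into R² extending a fixed valid embedding of the first two vertices and satisfying all unit-distance constraints is exactly 6, which is not a power of two. -/
/-!
Identify the plane with `ℂ`, so that `x 0 = 0` and `x 1 = 1`. The points at distance
`|b - a|` from both `a` and `b` are `a + ω (b - a)`, where `ω` runs over the two roots `ω`,
`1 - ω` of `X ^ 2 - X + 1` (the primitive sixth roots of unity). Hence `ζ := x 2` is such a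
root, and `x 3 ∈ {0, 1 + ζ}`. If `x 3 = 0`, then `x 4 ∈ {1, ζ - 1}`, and both lie on the unit
circle; if `x 3 = 1 + ζ`, then `x 4 ∈ {1, 2 ζ}`, and `|2 ζ| = 2` rules out `2 ζ`. This gives
three realizations for each of the two choices of `ζ`.
-/

lemma norm_eq_one_and_norm_sub_one_eq_one_iff {w : ℂ} :
    ‖w‖ = 1 ∧ ‖w - 1‖ = 1 ↔ w ^ 2 - w + 1 = 0 := by
  have hnorm (u : ℂ) : ‖u‖ = 1 ↔ u.re ^ 2 + u.im ^ 2 = 1 := by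
    rw [← pow_eq_one_iff_of_nonneg (norm_nonneg u) two_ne_zero, Complex.sq_norm,
      Complex.normSq_apply, sq, sq]
  rw [hnorm, hnorm, Complex.ext_iff]
  simp only [Complex.sub_re, Complex.sub_im, Complex.add_re, Complex.add_im, Complex.one_re,
    Complex.one_im, Complex.zero_re, Complex.zero_im, sq, Complex.mul_re, Complex.mul_im]
  constructor
  · rintro ⟨h₀, h₁⟩
    have hre : w.re = 1 / 2 := by linarith
    rw [hre] at h₀ ⊢
    constructor <;> linarith
  · rintro ⟨hre₀, him⟩
    have hre : w.re = 1 / 2 := by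
      have : w.im * (2 * w.re - 1) = 0 := by linarith
      rcases mul_eq_zero.1 this with h | h
      · nlinarith [sq_nonneg (w.re - 1 / 2)]
      · linarith
    rw [hre] at hre₀ ⊢
    constructor <;> linarith

lemma sq_sub_add_one_eq_zero_iff {ω w : ℂ} (hω : ω ^ 2 - ω + 1 = 0) :
    w ^ 2 - w + 1 = 0 ↔ w = ω ∨ w = 1 - ω := by
  have : w ^ 2 - w + 1 = (w - ω) * (w - (1 - ω)) := by linear_combination hω
  rw [this, mul_eq_zero, sub_eq_zero, sub_eq_zero]

lemma dist_eq_and_dist_eq_iff {ω a b z : ℂ} {r : ℝ} (hω : ω ^ 2 - ω + 1 = 0)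
    (hab : dist a b = r) :
    dist a z = r ∧ dist b z = r ↔ z = a + ω * (b - a) ∨ z = a + (1 - ω) * (b - a) := by
  subst hab
  rcases eq_or_ne a b with rfl | hab
  · simp [eq_comm]
  have hba : b - a ≠ 0 := sub_ne_zero.2 hab.symm
  obtain ⟨w, rfl⟩ : ∃ w, z = a + w * (b - a) := ⟨(z - a) / (b - a), by field_simp; ring⟩
  have hza : dist a (a + w * (b - a)) = ‖w‖ * dist a b := by
    rw [dist_comm, dist_eq_norm, dist_comm, dist_eq_norm, add_sub_cancel_left, norm_mul]
  have hzb : dist b (a + w * (b - a)) = ‖w - 1‖ * dist a b := by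
    rw [dist_comm, dist_eq_norm, dist_comm, dist_eq_norm, ← norm_mul]; congr 1; ring
  simp only [hza, hzb, mul_eq_right₀ (dist_ne_zero.2 hab),
    norm_eq_one_and_norm_sub_one_eq_one_iff, sq_sub_add_one_eq_zero_iff hω, add_right_inj,
    mul_left_inj' hba]

lemma exists_sq_sub_add_one_eq_zero : ∃ ω : ℂ, ω ^ 2 - ω + 1 = 0 := by
  obtain ⟨s, hs⟩ := IsAlgClosed.exists_eq_mul_self (discrim (1 : ℂ) (-1) 1)
  obtain ⟨ω, hω⟩ := exists_quadratic_eq_zero one_ne_zero ⟨s, hs⟩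
  exact ⟨ω, by linear_combination hω⟩

def realizations (P : Type*) [PseudoMetricSpace P] (p₀ p₁ : P) : Set (Fin 5 → P) :=
  {x | x 0 = p₀ ∧ x 1 = p₁ ∧
    ∀ i j : Fin 5, (i.val < j.val ∧ j.val - i.val ≤ 2) ∨ (i = 0 ∧ j = 4) →
      dist (x i) (x j) = 1}

section

variable {P Q : Type*} [PseudoMetricSpace P] [PseudoMetricSpace Q]

lemma realizations_eq_preimage (e : P ≃ᵢ Q) (p₀ p₁ : P) :
    realizations P p₀ p₁ = (e ∘ ·) ⁻¹' realizations Q (e p₀) (e p₁) := by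
  ext x
  simp only [realizations, Set.mem_ofPred_eq, Set.mem_preimage, Function.comp_apply,
    e.injective.eq_iff, e.dist_eq]

lemma encard_realizations_congr (e : P ≃ᵢ Q) (p₀ p₁ : P) :
    (realizations Q (e p₀) (e p₁)).encard = (realizations P p₀ p₁).encard := by
  rw [realizations_eq_preimage e,
    Set.encard_preimage_of_bijective ⟨e.injective.comp_left, e.surjective.comp_left⟩]

end

def realizationsOver (ζ : ℂ) : Set (Fin 5 → ℂ) :=
  {![0, 1, ζ, 0, 1], ![0, 1, ζ, 0, ζ - 1], ![0, 1, ζ, 1 + ζ, 1]}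

section

variable {ζ : ℂ}

lemma apply_two_of_mem_realizationsOver {z : Fin 5 → ℂ} (hz : z ∈ realizationsOver ζ) :
    z 2 = ζ := by
  rcases hz with rfl | rfl | rfl <;> rfl

lemma realizationsOver_subset (hζ : ζ ^ 2 - ζ + 1 = 0) :
    realizationsOver ζ ⊆ realizations ℂ 0 1 := by
  obtain ⟨h₀, h₁⟩ := norm_eq_one_and_norm_sub_one_eq_one_iff.2 hζ
  rintro z (rfl | rfl | rfl) <;> refine ⟨rfl, rfl, fun i j ↦ ?_⟩ <;>
    fin_cases i <;> fin_cases j <;> norm_num [dist_eq_norm, h₀, h₁, norm_sub_rev, Fin.ext_iff]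

lemma mem_realizationsOver_of_mem_realizations {z : Fin 5 → ℂ}
    (hz : z ∈ realizations ℂ 0 1) :
    z 2 ^ 2 - z 2 + 1 = 0 ∧ z ∈ realizationsOver (z 2) := by
  obtain ⟨h0, h1, hd⟩ := hz
  set ζ := z 2
  have d02 : dist 0 ζ = 1 := h0 ▸ hd 0 2 (by decide)
  have d12 : dist 1 ζ = 1 := h1 ▸ hd 1 2 (by decide)
  have d04 : dist 0 (z 4) = 1 := h0 ▸ hd 0 4 (by decide)
  have d24 : dist ζ (z 4) = 1 := hd 2 4 (by decide)
  have d34 : dist (z 3) (z 4) = 1 := hd 3 4 (by decide)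
  have hζ₀ : ‖ζ‖ = 1 := by rwa [dist_zero_left] at d02
  have hζ : ζ ^ 2 - ζ + 1 = 0 := norm_eq_one_and_norm_sub_one_eq_one_iff.1
    ⟨hζ₀, by rwa [dist_comm, dist_eq_norm] at d12⟩
  have hz : z = ![0, 1, ζ, z 3, z 4] := by
    funext i; fin_cases i <;> simp [h0, h1, ζ]
  refine ⟨hζ, hz ▸ ?_⟩
  rcases (dist_eq_and_dist_eq_iff hζ d12).1 ⟨h1 ▸ hd 1 3 (by decide), hd 2 3 (by decide)⟩
    with h3 | h3
  · rw [show z 3 = 0 by linear_combination h3 + hζ]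
    rcases (dist_eq_and_dist_eq_iff hζ d02).1 ⟨d04, d24⟩ with h4 | h4
    · simp [realizationsOver, show z 4 = ζ - 1 by linear_combination h4 + hζ]
    · simp [realizationsOver, show z 4 = 1 by linear_combination h4 - hζ]
  · rw [show z 3 = 1 + ζ by linear_combination h3 - hζ] at d34 ⊢
    have d23 : dist ζ (1 + ζ) = 1 := by
      rw [dist_comm, dist_eq_norm, add_sub_cancel_right, norm_one]
    rcases (dist_eq_and_dist_eq_iff hζ d23).1 ⟨d24, d34⟩ with h4 | h4
    · rw [h4, add_sub_cancel_right, mul_one, dist_zero_left, ← two_mul, norm_mul, hζ₀] at d04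
      norm_num at d04
    · simp [realizationsOver, show z 4 = 1 by linear_combination h4]

lemma realizations_complex_eq {ω : ℂ} (hω : ω ^ 2 - ω + 1 = 0) :
    realizations ℂ 0 1 = realizationsOver ω ∪ realizationsOver (1 - ω) := by
  refine subset_antisymm (fun z hz ↦ ?_) (Set.union_subset (realizationsOver_subset hω)
    (realizationsOver_subset (by linear_combination hω)))
  obtain ⟨hζ, hz⟩ := mem_realizationsOver_of_mem_realizations hz
  rcases (sq_sub_add_one_eq_zero_iff hω).1 hζ with h | h
  · exact .inl (h ▸ hz)
  · exact .inr (h ▸ hz)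

lemma disjoint_realizationsOver {ζ' : ℂ} (h : ζ ≠ ζ') :
    Disjoint (realizationsOver ζ) (realizationsOver ζ') :=
  Set.disjoint_left.2 fun _ hz hz' ↦
    h ((apply_two_of_mem_realizationsOver hz).symm.trans (apply_two_of_mem_realizationsOver hz'))

lemma encard_realizationsOver (hζ : ζ ^ 2 - ζ + 1 = 0) : (realizationsOver ζ).encard = 3 := by
  have h₄ : (1 : ℂ) ≠ ζ - 1 := fun h ↦ by
    norm_num [show ζ = 2 by linear_combination -h] at hζ
  have h₃ : (0 : ℂ) ≠ 1 + ζ := fun h ↦ by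
    norm_num [show ζ = -1 by linear_combination -h] at hζ
  rw [realizationsOver, Set.encard_insert_of_notMem, Set.encard_pair]
  · rfl
  all_goals simp [h₃, h₄]

end

theorem counterexample_six_solutions :
    {x : Fin 5 → EuclideanSpace ℝ (Fin 2) |
        x 0 = 0 ∧ x 1 = EuclideanSpace.single 0 1 ∧
        (∀ i j : Fin 5,
          (i.val < j.val ∧ j.val - i.val ≤ 2) ∨ (i = 0 ∧ j = 4) →
          dist (x i) (x j) = 1)}.encard = 6 := by
  obtain ⟨ω, hω⟩ := exists_sq_sub_add_one_eq_zero
  have hω' : (1 - ω) ^ 2 - (1 - ω) + 1 = 0 := by linear_combination hω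
  have hne : ω ≠ 1 - ω := fun h ↦ by
    norm_num [show ω = 1 / 2 by linear_combination h / 2] at hω
  let e := Complex.orthonormalBasisOneI.repr.toIsometryEquiv
  have he₀ : e 0 = 0 := Complex.orthonormalBasisOneI.repr.map_zero
  have he₁ : e 1 = EuclideanSpace.single 0 1 := by
    ext i; fin_cases i <;> simp [e, Complex.orthonormalBasisOneI_repr_apply]
  change (realizations _ 0 (EuclideanSpace.single 0 1)).encard = 6
  rw [← he₀, ← he₁, encard_realizations_congr, realizations_complex_eq hω,
    Set.encard_union_eq (disjoint_realizationsOver hne), encard_realizationsOver hω,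
    encard_realizationsOver hω']
  rfl
end
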